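/- Let E be a real separable Hilbert space, δ > 0, 0 ≤ t ≤ T, and let m be a finite Borel measure on the interval [-δ,0]. Let ζ : [t,T+δ] → E be strongly measurable with ∫_{t}^{T+δ} ‖ζ(s)‖_E² ds < ∞, and let λ : [t,T+δ] → ℝ be nonnegative and non-decreasing. Then ∫_{t}^{T} λ(s) ‖ζ_{δ+}(s)‖_E² ds ≤ m([-δ,0])² · ∫_{t}^{T+δ} λ(s) ‖ζ(s)‖_E² ds. -/

import Mathlib

/-!
Cauchy–Schwarz against the finite measure `m` gives
`‖ζ_{δ+}(s)‖² ≤ m(ℝ) ∫ ‖ζ(s - r)‖² m(dr)`. Since `m` lives on `[-δ, 0]`, the point `s - r` stays in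
`[t, T + δ]` and lies to the right of `s`, so `λ(s) ≤ λ(s - r)`. Tonelli and the translation
invariance of Lebesgue measure then bound `∫_t^T ∫ λ(s - r) ‖ζ(s - r)‖² m(dr) ds` by
`m(ℝ) ∫_t^{T+δ} λ ‖ζ‖²`. Working with lower Lebesgue integrals throughout, the moving average
`s ↦ ζ_{δ+}(s)` never has to be shown measurable.
-/

open MeasureTheory Set
open scoped ENNReal

theorem lintegral_sq_le_measure_univ_mul {α : Type*} [MeasurableSpace α] (μ : Measure α)
    (f : α → ℝ≥0∞) : (∫⁻ a, f a ∂μ) ^ 2 ≤ μ univ * ∫⁻ a, f a ^ 2 ∂μ := by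
  -- A measurable minorant realises the lower integral, so Hölder applies to it.
  obtain ⟨g, hg, hgf, hg_eq⟩ := exists_measurable_le_lintegral_eq μ f
  have holder := ENNReal.lintegral_mul_norm_pow_le (hg.pow_const 2).aemeasurable (μ := μ)
    (aemeasurable_const (b := (1 : ℝ≥0∞))) (p := 1 / 2) (q := 1 / 2) (by norm_num) (by norm_num)
    (by norm_num)
  have hsqrt : ∀ x : ℝ≥0∞, (x ^ 2) ^ (1 / 2 : ℝ) = x := fun x => by
    rw [← ENNReal.rpow_natCast, ← ENNReal.rpow_mul]; norm_num
  simp only [hsqrt, ENNReal.one_rpow, mul_one, lintegral_const, one_mul] at holder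
  calc (∫⁻ a, f a ∂μ) ^ 2 = (∫⁻ a, g a ∂μ) ^ 2 := by rw [hg_eq]
    _ ≤ (∫⁻ a, g a ^ 2 ∂μ) * μ univ := by
      grw [holder, mul_pow, ← ENNReal.rpow_natCast, ← ENNReal.rpow_natCast, ← ENNReal.rpow_mul,
        ← ENNReal.rpow_mul]
      norm_num
    _ ≤ μ univ * ∫⁻ a, f a ^ 2 ∂μ := by
      rw [mul_comm]; gcongr with a; exact hgf a

theorem enorm_integral_sq_le_measure_univ_mul {α E : Type*} [MeasurableSpace α]
    [NormedAddCommGroup E] [NormedSpace ℝ E] (μ : Measure α) (f : α → E) :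
    ‖∫ a, f a ∂μ‖ₑ ^ 2 ≤ μ univ * ∫⁻ a, ‖f a‖ₑ ^ 2 ∂μ := by
  grw [enorm_integral_le_lintegral_enorm]
  exact lintegral_sq_le_measure_univ_mul μ _

theorem lintegral_lintegral_comp_sub {G : Type*} [MeasurableSpace G] [AddGroup G]
    [MeasurableAdd₂ G] [MeasurableNeg G] (μ ν : Measure G) [SFinite μ] [SFinite ν]
    [μ.IsAddRightInvariant] {f : G → ℝ≥0∞} (hf : AEMeasurable f μ) :
    ∫⁻ x, ∫⁻ y, f (x - y) ∂ν ∂μ = ν univ * ∫⁻ x, f x ∂μ := by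
  rw [lintegral_lintegral_swap (f := fun x y => f (x - y))
    (hf.comp_quasiMeasurePreserving (quasiMeasurePreserving_sub_of_right_invariant μ ν))]
  simp [lintegral_sub_right_eq_self, mul_comm]

theorem lintegral_mul_enorm_integral_comp_sub_sq_le {E : Type*} [NormedAddCommGroup E]
    [NormedSpace ℝ E] {m : Measure ℝ} [IsFiniteMeasure m] {a b δ : ℝ}
    (hm : ∀ᵐ r ∂m, r ∈ Icc (-δ) 0) {w : ℝ → ℝ≥0∞} (hw : MonotoneOn w (Icc a (b + δ)))
    {ζ : ℝ → E}
    (hζ : AEMeasurable (fun u => w u * ‖ζ u‖ₑ ^ 2) (volume.restrict (Icc a (b + δ)))) :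
    ∫⁻ s in Icc a b, w s * ‖∫ r, ζ (s - r) ∂m‖ₑ ^ 2
      ≤ m univ ^ 2 * ∫⁻ u in Icc a (b + δ), w u * ‖ζ u‖ₑ ^ 2 := by
  set F := (Icc a (b + δ)).indicator fun u => w u * ‖ζ u‖ₑ ^ 2
  have hF : AEMeasurable F := (aemeasurable_indicator_iff measurableSet_Icc).2 hζ
  have pointwise : ∀ s ∈ Icc a b,
      w s * ‖∫ r, ζ (s - r) ∂m‖ₑ ^ 2 ≤ m univ * ∫⁻ r, F (s - r) ∂m := by
    intro s hs
    calc w s * ‖∫ r, ζ (s - r) ∂m‖ₑ ^ 2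
        ≤ w s * (m univ * ∫⁻ r, ‖ζ (s - r)‖ₑ ^ 2 ∂m) := by
          grw [enorm_integral_sq_le_measure_univ_mul]
      _ ≤ m univ * ∫⁻ r, w s * ‖ζ (s - r)‖ₑ ^ 2 ∂m := by
        grw [mul_left_comm, lintegral_const_mul_le]
      _ ≤ m univ * ∫⁻ r, F (s - r) ∂m := by
        gcongr 1
        refine lintegral_mono_ae (hm.mono fun r hr => ?_)
        have hsr : s - r ∈ Icc a (b + δ) := ⟨by linarith [hs.1, hr.2], by linarith [hs.2, hr.1]⟩
        simp only [F, indicator_of_mem hsr]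
        gcongr
        exact hw ⟨hs.1, by linarith [hs.2, hr.1, hr.2]⟩ hsr (by linarith [hr.2])
  calc ∫⁻ s in Icc a b, w s * ‖∫ r, ζ (s - r) ∂m‖ₑ ^ 2
      ≤ ∫⁻ s in Icc a b, m univ * ∫⁻ r, F (s - r) ∂m :=
        setLIntegral_mono' measurableSet_Icc pointwise
    _ ≤ ∫⁻ s, m univ * ∫⁻ r, F (s - r) ∂m := setLIntegral_le_lintegral _ _
    _ = m univ * (m univ * ∫⁻ u, F u) := by
      rw [lintegral_const_mul' _ _ (measure_ne_top m univ), lintegral_lintegral_comp_sub _ _ hF]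
    _ = m univ ^ 2 * ∫⁻ u in Icc a (b + δ), w u * ‖ζ u‖ₑ ^ 2 := by
      rw [lintegral_indicator measurableSet_Icc, ← mul_assoc, sq]

theorem enorm_mul_norm_sq_of_nonneg {E : Type*} [NormedAddCommGroup E] {c : ℝ} (hc : 0 ≤ c)
    (v : E) : ‖c * ‖v‖ ^ 2‖ₑ = ENNReal.ofReal c * ‖v‖ₑ ^ 2 := by
  rw [enorm_mul, enorm_pow, enorm_norm, Real.enorm_of_nonneg hc]

theorem integral_mul_norm_integral_comp_sub_sq_le {E : Type*} [NormedAddCommGroup E]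
    [NormedSpace ℝ E] {m : Measure ℝ} [IsFiniteMeasure m] {a b δ : ℝ}
    (hδ : 0 ≤ δ) (hm : ∀ᵐ r ∂m, r ∈ Icc (-δ) 0) {lam : ℝ → ℝ}
    (hlam_nonneg : ∀ s ∈ Icc a (b + δ), 0 ≤ lam s) (hlam : MonotoneOn lam (Icc a (b + δ)))
    {ζ : ℝ → E}
    (hint : IntegrableOn (fun s => lam s * ‖ζ s‖ ^ 2) (Icc a (b + δ))) :
    ∫ s in Icc a b, lam s * ‖∫ r, ζ (s - r) ∂m‖ ^ 2
      ≤ (m univ).toReal ^ 2 * ∫ u in Icc a (b + δ), lam u * ‖ζ u‖ ^ 2 := by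
  have hofReal : ∀ u ∈ Icc a (b + δ),
      ENNReal.ofReal (lam u * ‖ζ u‖ ^ 2) = ENNReal.ofReal (lam u) * ‖ζ u‖ₑ ^ 2 := fun u hu => by
    rw [← enorm_mul_norm_sq_of_nonneg (hlam_nonneg u hu),
      Real.enorm_of_nonneg (mul_nonneg (hlam_nonneg u hu) (sq_nonneg _))]
  have hmem : ∀ᵐ u ∂volume.restrict (Icc a (b + δ)), u ∈ Icc a (b + δ) :=
    ae_restrict_mem measurableSet_Icc
  have hlintegral := lintegral_mul_enorm_integral_comp_sub_sq_le hm
    (w := fun u => ENNReal.ofReal (lam u)) (ENNReal.ofReal_mono.comp_monotoneOn hlam)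
    (hint.1.aemeasurable.ennreal_ofReal.congr (hmem.mono hofReal))
  rw [← setLIntegral_congr_fun measurableSet_Icc hofReal, ← ofReal_integral_eq_lintegral_ofReal hint
    (hmem.mono fun u hu => mul_nonneg (hlam_nonneg u hu) (sq_nonneg _))] at hlintegral
  have hintegral_nonneg : 0 ≤ ∫ u in Icc a (b + δ), lam u * ‖ζ u‖ ^ 2 :=
    setIntegral_nonneg measurableSet_Icc fun u hu => mul_nonneg (hlam_nonneg u hu) (sq_nonneg _)
  rw [← ENNReal.ofReal_le_ofReal_iff (mul_nonneg (by positivity) hintegral_nonneg)]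
  calc ENNReal.ofReal (∫ s in Icc a b, lam s * ‖∫ r, ζ (s - r) ∂m‖ ^ 2)
      ≤ ∫⁻ s in Icc a b, ‖lam s * ‖∫ r, ζ (s - r) ∂m‖ ^ 2‖ₑ :=
        (Real.ofReal_le_enorm _).trans (enorm_integral_le_lintegral_enorm _)
    _ = ∫⁻ s in Icc a b, ENNReal.ofReal (lam s) * ‖∫ r, ζ (s - r) ∂m‖ₑ ^ 2 :=
        setLIntegral_congr_fun measurableSet_Icc fun s hs =>
          enorm_mul_norm_sq_of_nonneg (hlam_nonneg s ⟨hs.1, by linarith [hs.2]⟩) _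
    _ ≤ m univ ^ 2 * ENNReal.ofReal (∫ u in Icc a (b + δ), lam u * ‖ζ u‖ ^ 2) := hlintegral
    _ = ENNReal.ofReal ((m univ).toReal ^ 2 * ∫ u in Icc a (b + δ), lam u * ‖ζ u‖ ^ 2) := by
      rw [ENNReal.ofReal_mul (by positivity), ENNReal.ofReal_pow ENNReal.toReal_nonneg,
        ENNReal.ofReal_toReal (measure_ne_top m univ)]

theorem anticipated_moving_average_estimate_general
    {E : Type*} [NormedAddCommGroup E] [InnerProductSpace ℝ E]
    (δ t T : ℝ) (hδ : 0 < δ) (htT : t ≤ T)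
    (m : Measure ℝ) [IsFiniteMeasure m] (hm : m (Set.Icc (-δ) 0)ᶜ = 0)
    (ζ : ℝ → E)
    (hζ_int : IntegrableOn (fun s => ‖ζ s‖ ^ 2) (Set.Icc t (T + δ)))
    (lam : ℝ → ℝ)
    (hlam_nonneg : ∀ s ∈ Set.Icc t (T + δ), 0 ≤ lam s)
    (hlam_mono : MonotoneOn lam (Set.Icc t (T + δ))) :
    ∫ s in Set.Icc t T, lam s * ‖∫ r, ζ (s - r) ∂m‖ ^ 2
      ≤ (m (Set.Icc (-δ) 0)).toReal ^ 2
          * ∫ s in Set.Icc t (T + δ), lam s * ‖ζ s‖ ^ 2 := by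
  have hlam_bdd : ∀ᵐ s ∂volume.restrict (Icc t (T + δ)), ‖lam s‖ ≤ lam (T + δ) :=
    (ae_restrict_mem measurableSet_Icc).mono fun s hs => by
      rw [Real.norm_of_nonneg (hlam_nonneg s hs)]
      exact hlam_mono hs ⟨by linarith, le_rfl⟩ hs.2
  have hint : IntegrableOn (fun s => lam s * ‖ζ s‖ ^ 2) (Icc t (T + δ)) :=
    hζ_int.bdd_mul
      (aemeasurable_restrict_of_monotoneOn measurableSet_Icc hlam_mono).aestronglyMeasurable
      hlam_bdd
  rw [measure_congr (ae_eq_univ.2 hm)]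
  exact integral_mul_norm_integral_comp_sub_sq_le hδ.le hm hlam_nonneg hlam_mono hint

/-- Lemma 3.6 of the paper. For a finite Borel measure `m` supported on
`[-δ, 0]`, an `L²` function `ζ` on `[t, T+δ]` with values in a real separable Hilbert space,
and a nonnegative non-decreasing weight `lam`, the anticipated moving average
`ζ_{δ+}(s) = ∫ ζ(s-r) m(dr)` satisfies
`∫_t^T lam(s) ‖ζ_{δ+}(s)‖² ds ≤ m([-δ,0])² ∫_t^{T+δ} lam(s) ‖ζ(s)‖² ds`. -/
theorem anticipated_moving_average_estimate
    {E : Type*} [NormedAddCommGroup E] [InnerProductSpace ℝ E] [CompleteSpace E]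
    [TopologicalSpace.SeparableSpace E]
    (δ t T : ℝ) (hδ : 0 < δ) (ht : 0 ≤ t) (htT : t ≤ T)
    (m : Measure ℝ) [IsFiniteMeasure m] (hm : m (Set.Icc (-δ) 0)ᶜ = 0)
    (ζ : ℝ → E)
    (hζ_meas : AEStronglyMeasurable ζ (volume.restrict (Set.Icc t (T + δ))))
    (hζ_int : IntegrableOn (fun s => ‖ζ s‖ ^ 2) (Set.Icc t (T + δ)))
    (lam : ℝ → ℝ)
    (hlam_nonneg : ∀ s ∈ Set.Icc t (T + δ), 0 ≤ lam s)
    (hlam_mono : MonotoneOn lam (Set.Icc t (T + δ))) :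
    ∫ s in Set.Icc t T, lam s * ‖∫ r, ζ (s - r) ∂m‖ ^ 2
      ≤ (m (Set.Icc (-δ) 0)).toReal ^ 2
          * ∫ s in Set.Icc t (T + δ), lam s * ‖ζ s‖ ^ 2 :=
  anticipated_moving_average_estimate_general δ t T hδ htT m hm ζ hζ_int lam hlam_nonneg hlam_mono
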